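/- arXiv:2404.16961 — 4 statements merged into one kernel-verified Lean document; each statement's English description precedes it below -/
import Mathlib

section
/- Suppose the common trend assumption holds, i.e. E[Y_1(0) − Y_0(0) | D=1] = E[Y_1(0) − Y_0(0) | D=0], and the no-anticipation assumption holds, i.e. Y_0(1) = Y_0(0) almost surely. Then the average treatment effect on the treated satisfies E[Y_1(1) − Y_1(0) | D=1] = (E[Y_1 | D=1] − E[Y_0 | D=1]) − (E[Y_1 | D=0] − E[Y_0 | D=0]), i.e. the ATET is identified by the difference-in-differences of observed mean outcomes. -/
/-!
On `{D = 1}` the observed outcomes are `Y_1(1)` and, by no anticipation, `Y_0(0)`; on `{D = 0}`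
they are `Y_1(0)` and `Y_0(0)`. So the difference-in-differences equals the ATET plus the gap
between the untreated trends of the two groups, and common trends makes that gap vanish.
-/

open MeasureTheory ProbabilityTheory

section Conditioning

variable {Ω : Type*} [MeasurableSpace Ω] {μ : Measure Ω}

theorem MeasureTheory.Integrable.cond {f : Ω → ℝ} (hf : Integrable f μ) (s : Set Ω) :
    Integrable f μ[|s] := by
  by_cases hs : μ s = 0
  · simp [ProbabilityTheory.cond_eq_zero.2 (Or.inr hs)]
  · exact hf.restrict.smul_measure (ENNReal.inv_ne_top.2 hs)

variable {D Y Yd0 Yd1 : Ω → ℝ}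

theorem integral_cond_treated_eq_of_switching (hD : Measurable D)
    (hY : ∀ ω, Y ω = D ω * Yd1 ω + (1 - D ω) * Yd0 ω) :
    ∫ ω, Y ω ∂μ[|{ω | D ω = 1}] = ∫ ω, Yd1 ω ∂μ[|{ω | D ω = 1}] := by
  refine integral_congr_ae ?_
  filter_upwards [ae_cond_mem (hD (measurableSet_singleton 1))] with ω (hω : D ω = 1)
  simp [hY ω, hω]

theorem integral_cond_control_eq_of_switching (hD : Measurable D)
    (hY : ∀ ω, Y ω = D ω * Yd1 ω + (1 - D ω) * Yd0 ω) :
    ∫ ω, Y ω ∂μ[|{ω | D ω = 0}] = ∫ ω, Yd0 ω ∂μ[|{ω | D ω = 0}] := by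
  refine integral_congr_ae ?_
  filter_upwards [ae_cond_mem (hD (measurableSet_singleton 0))] with ω (hω : D ω = 0)
  simp [hY ω, hω]

end Conditioning

theorem did_identifies_atet_general
    {Ω : Type*} [MeasurableSpace Ω] (μ : Measure Ω)
    (D Y0d0 Y0d1 Y1d0 Y1d1 Y0 Y1 : Ω → ℝ)
    (hDmeas : Measurable D)
    (hY0d0int : Integrable Y0d0 μ)
    (hY1d0int : Integrable Y1d0 μ) (hY1d1int : Integrable Y1d1 μ)
    (hY0 : ∀ ω, Y0 ω = D ω * Y0d1 ω + (1 - D ω) * Y0d0 ω)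
    (hY1 : ∀ ω, Y1 ω = D ω * Y1d1 ω + (1 - D ω) * Y1d0 ω)
    -- common trend assumption
    (hCT : ∫ ω, (Y1d0 ω - Y0d0 ω) ∂(μ[|{ω | D ω = 1}]) =
           ∫ ω, (Y1d0 ω - Y0d0 ω) ∂(μ[|{ω | D ω = 0}]))
    -- no anticipation assumption
    (hNA : Y0d1 =ᵐ[μ] Y0d0) :
    ∫ ω, (Y1d1 ω - Y1d0 ω) ∂(μ[|{ω | D ω = 1}]) =
      (∫ ω, Y1 ω ∂(μ[|{ω | D ω = 1}]) - ∫ ω, Y0 ω ∂(μ[|{ω | D ω = 1}])) -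
      (∫ ω, Y1 ω ∂(μ[|{ω | D ω = 0}]) - ∫ ω, Y0 ω ∂(μ[|{ω | D ω = 0}])) := by
  rw [integral_cond_treated_eq_of_switching hDmeas hY1,
    integral_cond_treated_eq_of_switching hDmeas hY0,
    integral_congr_ae (cond_absolutelyContinuous.ae_eq hNA),
    integral_cond_control_eq_of_switching hDmeas hY1,
    integral_cond_control_eq_of_switching hDmeas hY0,
    integral_sub (hY1d1int.cond _) (hY1d0int.cond _)]
  rw [integral_sub (hY1d0int.cond _) (hY0d0int.cond _),
    integral_sub (hY1d0int.cond _) (hY0d0int.cond _)] at hCT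
  linarith

/-- Under common trends and no anticipation, the ATET is identified by the
difference-in-differences of observed mean outcomes. -/
theorem did_identifies_atet
    {Ω : Type*} [MeasurableSpace Ω] (μ : Measure Ω) [IsProbabilityMeasure μ]
    (D Y0d0 Y0d1 Y1d0 Y1d1 Y0 Y1 : Ω → ℝ)
    (hDmeas : Measurable D)
    (hDbin : ∀ ω, D ω = 0 ∨ D ω = 1)
    (hD1pos : 0 < μ {ω | D ω = 1})
    (hD1lt : μ {ω | D ω = 1} < 1)
    (hY0d0int : Integrable Y0d0 μ) (hY0d1int : Integrable Y0d1 μ)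
    (hY1d0int : Integrable Y1d0 μ) (hY1d1int : Integrable Y1d1 μ)
    (hY0 : ∀ ω, Y0 ω = D ω * Y0d1 ω + (1 - D ω) * Y0d0 ω)
    (hY1 : ∀ ω, Y1 ω = D ω * Y1d1 ω + (1 - D ω) * Y1d0 ω)
    -- common trend assumption
    (hCT : ∫ ω, (Y1d0 ω - Y0d0 ω) ∂(μ[|{ω | D ω = 1}]) =
           ∫ ω, (Y1d0 ω - Y0d0 ω) ∂(μ[|{ω | D ω = 0}]))
    -- no anticipation assumption
    (hNA : Y0d1 =ᵐ[μ] Y0d0) :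
    ∫ ω, (Y1d1 ω - Y1d0 ω) ∂(μ[|{ω | D ω = 1}]) =
      (∫ ω, Y1 ω ∂(μ[|{ω | D ω = 1}]) - ∫ ω, Y0 ω ∂(μ[|{ω | D ω = 1}])) -
      (∫ ω, Y1 ω ∂(μ[|{ω | D ω = 0}]) - ∫ ω, Y0 ω ∂(μ[|{ω | D ω = 0}])) :=
  did_identifies_atet_general μ D Y0d0 Y0d1 Y1d0 Y1d1 Y0 Y1 hDmeas hY0d0int hY1d0int hY1d1int hY0
    hY1 hCT hNA
end

section
/- Suppose the common trend assumption E[Y_1(0) − Y_0(0) | D=1] = E[Y_1(0) − Y_0(0) | D=0] holds, the common trend across matched groups assumption E[ E[Y_1(0) − Y_0(0) | Y_0, D=0] | D=1 ] = E[Y_1(0) − Y_0(0) | D=1] holds, and the no-anticipation assumption Y_0(1) = Y_0(0) almost surely holds. Then the testable implication E[ E[Y_1 − Y_0 | Y_0, D=0] | D=1 ] = E[Y_1 − Y_0 | D=0] holds, where the inner conditional expectation denotes (a version of) the conditional expectation of Y_1 − Y_0 given σ(Y_0) under the conditional probability measure P(· | D=0), evaluated and then averaged over the distribution of Y_0 given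 D=1. -/
open MeasureTheory ProbabilityTheory

theorem integral_cond_congr_of_eqOn {Ω E : Type*} [MeasurableSpace Ω] [NormedAddCommGroup E]
    [NormedSpace ℝ E] {μ : Measure Ω} {s : Set Ω} (hs : MeasurableSet s) {f g : Ω → E}
    (hfg : Set.EqOn f g s) :
    ∫ ω, f ω ∂μ[|s] = ∫ ω, g ω ∂μ[|s] :=
  integral_congr_ae <| (ae_cond_mem hs).mono fun _ hω => hfg hω

theorem observed_eq_untreated_of_eq_zero {Ω : Type*} {D Y Yd0 Yd1 : Ω → ℝ}
    (hY : ∀ ω, Y ω = D ω * Yd1 ω + (1 - D ω) * Yd0 ω) :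
    Set.EqOn Y Yd0 {ω | D ω = 0} := fun ω hω => by
  simp [hY ω, show D ω = 0 from hω]

theorem matched_control_testable_implication_general
    {Ω : Type*} [MeasurableSpace Ω] (μ : Measure Ω)
    (D Y0d0 Y0d1 Y1d0 Y1d1 Y0 Y1 : Ω → ℝ)
    (hDmeas : Measurable D)
    -- observational rule
    (hY0 : ∀ ω, Y0 ω = D ω * Y0d1 ω + (1 - D ω) * Y0d0 ω)
    (hY1 : ∀ ω, Y1 ω = D ω * Y1d1 ω + (1 - D ω) * Y1d0 ω)
    (m : ℝ → ℝ)
    -- common trend assumption (Assumption 1)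
    (hCT : ∫ ω, (Y1d0 ω - Y0d0 ω) ∂(μ[|{ω | D ω = 1}]) =
           ∫ ω, (Y1d0 ω - Y0d0 ω) ∂(μ[|{ω | D ω = 0}]))
    -- common trend across matched groups (Assumption 4)
    (hMatch : ∫ ω, m (Y0 ω) ∂(μ[|{ω | D ω = 1}]) =
              ∫ ω, (Y1d0 ω - Y0d0 ω) ∂(μ[|{ω | D ω = 1}])) :
    ∫ ω, m (Y0 ω) ∂(μ[|{ω | D ω = 1}]) =
      ∫ ω, (Y1 ω - Y0 ω) ∂(μ[|{ω | D ω = 0}]) := by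
  have hcontrol : MeasurableSet {ω | D ω = 0} := measurableSet_eq_fun hDmeas measurable_const
  calc ∫ ω, m (Y0 ω) ∂(μ[|{ω | D ω = 1}])
      = ∫ ω, (Y1d0 ω - Y0d0 ω) ∂(μ[|{ω | D ω = 0}]) := hMatch.trans hCT
    _ = ∫ ω, (Y1 ω - Y0 ω) ∂(μ[|{ω | D ω = 0}]) :=
      integral_cond_congr_of_eqOn hcontrol fun ω hω => by
        rw [observed_eq_untreated_of_eq_zero hY1 hω, observed_eq_untreated_of_eq_zero hY0 hω]

/-- Under the common trend assumption, the common trend across matched groups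
assumption, and no anticipation, the testable implication
`E[E[Y₁ − Y₀ | Y₀, D=0] | D=1] = E[Y₁ − Y₀ | D=0]` holds. -/
theorem matched_control_testable_implication
    {Ω : Type*} [MeasurableSpace Ω] (μ : Measure Ω) [IsProbabilityMeasure μ]
    (D Y0d0 Y0d1 Y1d0 Y1d1 Y0 Y1 : Ω → ℝ)
    (hDmeas : Measurable D)
    (hDbin : ∀ ω, D ω = 0 ∨ D ω = 1)
    (hD1pos : 0 < μ {ω | D ω = 1})
    (hD1lt : μ {ω | D ω = 1} < 1)
    (hY0meas : Measurable Y0)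
    (hY0d0int : Integrable Y0d0 μ) (hY0d1int : Integrable Y0d1 μ)
    (hY1d0int : Integrable Y1d0 μ) (hY1d1int : Integrable Y1d1 μ)
    -- observational rule
    (hY0 : ∀ ω, Y0 ω = D ω * Y0d1 ω + (1 - D ω) * Y0d0 ω)
    (hY1 : ∀ ω, Y1 ω = D ω * Y1d1 ω + (1 - D ω) * Y1d0 ω)
    -- no anticipation assumption
    (hNA : Y0d1 =ᵐ[μ] Y0d0)
    -- m is (a version of) E[Y₁(0) − Y₀(0) | Y₀, D = 0], and hence also of
    -- E[Y₁ − Y₀ | Y₀, D = 0], as a measurable function of Y₀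
    (m : ℝ → ℝ) (hm : Measurable m)
    (hmPot : (fun ω => m (Y0 ω)) =ᵐ[μ[|{ω | D ω = 0}]]
      MeasureTheory.condExp (MeasurableSpace.comap Y0 inferInstance)
        (μ[|{ω | D ω = 0}]) (fun ω => Y1d0 ω - Y0d0 ω))
    (hmObs : (fun ω => m (Y0 ω)) =ᵐ[μ[|{ω | D ω = 0}]]
      MeasureTheory.condExp (MeasurableSpace.comap Y0 inferInstance)
        (μ[|{ω | D ω = 0}]) (fun ω => Y1 ω - Y0 ω))
    -- m (Y₀) is integrable under P(·|D=1)
    (hmInt : Integrable (fun ω => m (Y0 ω)) (μ[|{ω | D ω = 1}]))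
    -- common support: P(D=1|Y₀) < 1 almost surely
    (p : ℝ → ℝ) (hp : Measurable p)
    (hpVer : (fun ω => p (Y0 ω)) =ᵐ[μ]
      MeasureTheory.condExp (MeasurableSpace.comap Y0 inferInstance) μ D)
    (hCS : ∀ᵐ ω ∂μ, p (Y0 ω) < 1)
    -- common trend assumption (Assumption 1)
    (hCT : ∫ ω, (Y1d0 ω - Y0d0 ω) ∂(μ[|{ω | D ω = 1}]) =
           ∫ ω, (Y1d0 ω - Y0d0 ω) ∂(μ[|{ω | D ω = 0}]))
    -- common trend across matched groups (Assumption 4)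
    (hMatch : ∫ ω, m (Y0 ω) ∂(μ[|{ω | D ω = 1}]) =
              ∫ ω, (Y1d0 ω - Y0d0 ω) ∂(μ[|{ω | D ω = 1}])) :
    ∫ ω, m (Y0 ω) ∂(μ[|{ω | D ω = 1}]) =
      ∫ ω, (Y1 ω - Y0 ω) ∂(μ[|{ω | D ω = 0}]) :=
  matched_control_testable_implication_general μ D Y0d0 Y0d1 Y1d0 Y1d1 Y0 Y1 hDmeas hY0 hY1 m hCT
    hMatch
end

section
/- In the non-separable model Y_t(0) = α_t·U + U for t ∈ {0,1} with real constants α_0 ≠ −1 and α_1, and integrable real random variable U, the pre-treatment potential outcome satisfies Y_0(0) = (1 + α_0)·U, and the conditional trend satisfies E[Y_1(0) − Y_0(0) | Y_0(0)] = ((α_1 − α_0)/(1 + α_0))·Y_0(0) almost surely. Hence, if α_1 ≠ α_0 and U is not almost surely constant, then E[Y_1(0) − Y_0(0) | Y_0(0)] ≠ E[Y_1(0) − Y_0(0)] with positive probability, i.e. the common trend assumption across pre-treatment outcomes (Assumption 5) is violated. -/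
open MeasureTheory ProbabilityTheory

/-! A function of `X` is `σ(X)`-measurable, so it is its own conditional expectation given `X`.
Here the trend `Y₁(0) - Y₀(0) = (α₁ - α₀) U` is the multiple `(α₁ - α₀)/(1 + α₀)` of
`Y₀(0)`, and a nonzero multiple of `U` is almost surely constant only if `U` is. -/

theorem condExp_comap_comp {Ω β E : Type*} [MeasurableSpace Ω] [MeasurableSpace β]
    [NormedAddCommGroup E] [NormedSpace ℝ E] [CompleteSpace E]
    {μ : Measure Ω} [IsFiniteMeasure μ] {X : Ω → β} (hX : Measurable X)
    {g : β → E} (hg : StronglyMeasurable g) (hgX : Integrable (g ∘ X) μ) :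
    μ[g ∘ X | MeasurableSpace.comap X inferInstance] = g ∘ X :=
  condExp_of_stronglyMeasurable hX.comap_le (hg.comp_measurable (comap_measurable X)) hgX

theorem Filter.EventuallyEq.eq_div_of_const_mul {α K : Type*} [Field K] {l : Filter α}
    {f : α → K} {a b : K} (ha : a ≠ 0) (h : (fun x => a * f x) =ᶠ[l] fun _ => b) :
    f =ᶠ[l] fun _ => b / a :=
  h.mono fun _ hx => eq_div_of_mul_eq ha ((mul_comm _ _).trans hx)

/-- In the non-separable model `Y_t(0) = α_t U + U` with `α₀ ≠ −1`, the conditional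
trend given the pre-treatment potential outcome is linear in `Y₀(0)`; hence if
`α₁ ≠ α₀` and `U` is not almost surely constant, Assumption 5 (common trends across
pre-treatment outcomes) is violated with positive probability. -/
theorem nonseparable_model_conditional_trend
    {Ω : Type*} [MeasurableSpace Ω] (μ : Measure Ω) [IsProbabilityMeasure μ]
    (α0 α1 : ℝ) (hα0 : α0 ≠ -1) (U : Ω → ℝ)
    (hUmeas : Measurable U) (hUint : Integrable U μ)
    (Y0p Y1p : Ω → ℝ)
    (hY0p : ∀ ω, Y0p ω = α0 * U ω + U ω)
    (hY1p : ∀ ω, Y1p ω = α1 * U ω + U ω) :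
    -- Y₀(0) = (1 + α₀)·U
    (∀ ω : Ω, Y0p ω = (1 + α0) * U ω)
    -- E[Y₁(0) − Y₀(0) | Y₀(0)] = ((α₁ − α₀)/(1 + α₀))·Y₀(0) almost surely
    ∧ (MeasureTheory.condExp (MeasurableSpace.comap Y0p inferInstance) μ
        (fun ω => Y1p ω - Y0p ω) =ᵐ[μ]
        fun ω => ((α1 - α0) / (1 + α0)) * Y0p ω)
    -- violation of Assumption 5 with positive probability
    ∧ (α1 ≠ α0 → (¬ ∃ c : ℝ, U =ᵐ[μ] fun _ => c) →
        0 < μ {ω | MeasureTheory.condExp (MeasurableSpace.comap Y0p inferInstance) μ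
          (fun ω' => Y1p ω' - Y0p ω') ω ≠ ∫ ω', (Y1p ω' - Y0p ω') ∂μ}) := by
  have hα0' : 1 + α0 ≠ 0 := fun h => hα0 (by linarith)
  have hY0 : Y0p = fun ω => (1 + α0) * U ω := funext fun ω => by rw [hY0p]; ring
  set c := (α1 - α0) / (1 + α0)
  have htrend : (fun ω => Y1p ω - Y0p ω) = fun ω => c * Y0p ω :=
    funext fun ω => by rw [hY1p, hY0]; simp only [c]; field_simp; ring
  have hce : μ[fun ω => Y1p ω - Y0p ω | MeasurableSpace.comap Y0p inferInstance] =
      fun ω => c * Y0p ω := by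
    rw [htrend]
    exact condExp_comap_comp (hY0 ▸ hUmeas.const_mul _)
      (measurable_const_mul c).stronglyMeasurable ((hY0 ▸ hUint.const_mul _).const_mul c)
  refine ⟨congrFun hY0, .of_eq hce, fun hα hU => pos_iff_ne_zero.2 fun h0 => ?_⟩
  have hc : c ≠ 0 := div_ne_zero (sub_ne_zero.2 hα) hα0'
  have hY0const := (hce ▸ ae_iff.2 h0 : (fun ω => c * Y0p ω) =ᵐ[μ] _).eq_div_of_const_mul hc
  rw [hY0] at hY0const
  exact hU ⟨_, hY0const.eq_div_of_const_mul hα0'⟩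
end

section
/- Doubly robust representation of the test statistic: let μ(Y_0, X) be a version of E[Y_1 − Y_0 | Y_0, X, D=0], μ(X) a version of E[Y_1 − Y_0 | X, D=0], p(Y_0, X) = P(D=1 | Y_0, X), and p(X) = P(D=1 | X), and assume p(Y_0, X) < 1 almost surely and all displayed quantities are integrable. Then: (i) E[μ(Y_0,X)·D] / P(D=1) = E[μ(Y_0,X) | D=1] and E[μ(X)·D] / P(D=1) = E[μ(X) | D=1]; (ii) E[ (Y_1 − Y_0 − μ(Y_0,X))·(1−D)·p(Y_0,X) / (1 − p(Y_0,X)) ] = 0 and E[ (Y_1 − Y_0 − μ(X))·(1−D)·p(X) / (1 − p(X)) ] = 0; consequently (iii) θ := E[ μ(Y_0,X)·D/P(D=1) + (Y_1 − Y_0 − μ(Y_0,X))·(1−D)·p(Y_0,X)/((1 − p(Y_0,X))·P(D=1)) ] − E[ μ(X)·D/P(D=1) + (Y_1 − Y_0 − μ(X))·(1−D)·p(X)/((1 − p(X))·P(D=1)) ] equals E[μ(Y_0,X) | D=1] − E[μ(X) | D=1]. -/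
/-!
On `{D = 0}` the residual `Y₁ - Y₀ - μ` is orthogonal, under `P(· | D = 0)`, to every function of
the conditioning variables, in particular to the odds weight `p / (1 - p)`; this kills the
augmentation terms. The treated moments are integrals over `{D = 1}`, i.e. conditional means
rescaled by `P(D = 1)`, and `θ` follows by linearity.
-/

open MeasureTheory ProbabilityTheory

section Cond

variable {Ω : Type*} [MeasurableSpace Ω] {μ : Measure Ω} {s : Set Ω} {f : Ω → ℝ}

lemma integral_cond_eq_setIntegral_div :
    ∫ ω, f ω ∂μ[|s] = (∫ ω in s, f ω ∂μ) / (μ s).toReal := by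
  rw [ProbabilityTheory.cond, integral_smul_measure, smul_eq_mul, ENNReal.toReal_inv,
    div_eq_inv_mul]

lemma setIntegral_eq_toReal_mul_integral_cond [IsFiniteMeasure μ] :
    ∫ ω in s, f ω ∂μ = (μ s).toReal * ∫ ω, f ω ∂μ[|s] := by
  by_cases hs : μ s = 0
  · simp [Measure.restrict_eq_zero.mpr hs, hs]
  · rw [integral_cond_eq_setIntegral_div, mul_div_cancel₀]
    exact ENNReal.toReal_ne_zero.mpr ⟨hs, measure_ne_top μ s⟩

lemma integrable_cond_of_integrableOn (hf : IntegrableOn f s μ) : Integrable f μ[|s] := by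
  by_cases hs : μ s = 0
  · simp [cond_eq_zero_of_meas_eq_zero hs]
  · exact hf.smul_measure (ENNReal.inv_ne_top.mpr hs)

end Cond

section Indicator

variable {Ω : Type*} [MeasurableSpace Ω] {μ : Measure Ω} {D : Ω → ℝ}

lemma integral_mul_eq_setIntegral_of_zero_or_one (hD : Measurable D)
    (hD01 : ∀ ω, D ω = 0 ∨ D ω = 1) (φ : Ω → ℝ) :
    ∫ ω, φ ω * D ω ∂μ = ∫ ω in {ω | D ω = 1}, φ ω ∂μ := by
  rw [← integral_indicator (measurableSet_eq_fun hD measurable_const)]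
  congr 1
  ext ω
  rcases hD01 ω with h | h <;> simp [Set.indicator, h]

lemma integral_mul_one_sub_eq_setIntegral_of_zero_or_one (hD : Measurable D)
    (hD01 : ∀ ω, D ω = 0 ∨ D ω = 1) (φ : Ω → ℝ) :
    ∫ ω, φ ω * (1 - D ω) ∂μ = ∫ ω in {ω | D ω = 0}, φ ω ∂μ := by
  have hD01' (ω : Ω) : 1 - D ω = 0 ∨ 1 - D ω = 1 := by
    rcases hD01 ω with h | h <;> simp [h]
  simpa only [sub_eq_self] using
    integral_mul_eq_setIntegral_of_zero_or_one (μ := μ) (D := fun ω => 1 - D ω)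
      (measurable_const.sub hD) hD01' φ

lemma integral_mul_div_eq_integral_cond_of_zero_or_one (hD : Measurable D)
    (hD01 : ∀ ω, D ω = 0 ∨ D ω = 1) (φ : Ω → ℝ) :
    (∫ ω, φ ω * D ω ∂μ) / (μ {ω | D ω = 1}).toReal = ∫ ω, φ ω ∂μ[|{ω | D ω = 1}] := by
  rw [integral_mul_eq_setIntegral_of_zero_or_one hD hD01, integral_cond_eq_setIntegral_div]

end Indicator

lemma integral_mul_sub_condExp_eq_zero {Ω : Type*} {m m₀ : MeasurableSpace Ω} (hm : m ≤ m₀)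
    {ν : Measure[m₀] Ω} [IsFiniteMeasure ν] {f g h : Ω → ℝ}
    (hf : StronglyMeasurable[m] f) (hg : StronglyMeasurable[m] g) (hgh : g =ᵐ[ν] ν[h | m])
    (hh : Integrable h ν) (hfhg : Integrable (fun ω => f ω * (h ω - g ω)) ν) :
    ∫ ω, f ω * (h ω - g ω) ∂ν = 0 := by
  have hg_int : Integrable g ν := integrable_condExp.congr hgh.symm
  have hres : ν[h - g | m] =ᵐ[ν] 0 := by
    filter_upwards [condExp_sub hh hg_int m, hgh] with ω hsub hω
    rw [hsub, Pi.sub_apply, condExp_of_stronglyMeasurable hm hg hg_int, ← hω, sub_self,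
      Pi.zero_apply]
  calc ∫ ω, f ω * (h ω - g ω) ∂ν = ∫ ω, ν[f * (h - g) | m] ω ∂ν := (integral_condExp hm).symm
    _ = ∫ ω, (f * ν[h - g | m]) ω ∂ν :=
        integral_congr_ae (condExp_mul_of_stronglyMeasurable_left hf hfhg (hh.sub hg_int))
    _ = ∫ ω, (f * 0 : Ω → ℝ) ω ∂ν := integral_congr_ae (Filter.EventuallyEq.rfl.mul hres)
    _ = 0 := by simp

lemma integral_residual_mul_odds_eq_zero {Ω : Type*} {m m₀ : MeasurableSpace Ω} (hm : m ≤ m₀)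
    {μ : Measure[m₀] Ω} [IsFiniteMeasure μ] {D h g p : Ω → ℝ} (hD : Measurable D)
    (hD01 : ∀ ω, D ω = 0 ∨ D ω = 1) (hh : Integrable h μ)
    (hg : Measurable[m] g) (hgh : g =ᵐ[μ[|{ω | D ω = 0}]] μ[|{ω | D ω = 0}][h | m])
    (hp : Measurable[m] p)
    (hint : Integrable (fun ω => (h ω - g ω) * (1 - D ω) * p ω / (1 - p ω)) μ) :
    ∫ ω, (h ω - g ω) * (1 - D ω) * p ω / (1 - p ω) ∂μ = 0 := by
  set F : Ω → ℝ := fun ω => p ω / (1 - p ω) * (h ω - g ω)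
  have hF (ω : Ω) : (h ω - g ω) * (1 - D ω) * p ω / (1 - p ω) = F ω * (1 - D ω) := by
    simp only [F]
    ring
  have hF_int : IntegrableOn F {ω | D ω = 0} μ := by
    refine hint.integrableOn.congr_fun (fun ω hω => ?_) (hD (measurableSet_singleton 0))
    dsimp only
    rw [hF, show D ω = 0 from hω, sub_zero, mul_one]
  have hodds : StronglyMeasurable[m] fun ω => p ω / (1 - p ω) :=
    (hp.div (measurable_const.sub hp)).stronglyMeasurable
  rw [integral_congr_ae (ae_of_all μ hF),
    integral_mul_one_sub_eq_setIntegral_of_zero_or_one hD hD01,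
    setIntegral_eq_toReal_mul_integral_cond,
    integral_mul_sub_condExp_eq_zero hm hodds hg.stronglyMeasurable hgh
      (integrable_cond_of_integrableOn hh.integrableOn) (integrable_cond_of_integrableOn hF_int),
    mul_zero]

lemma integral_div_add_div_mul {Ω : Type*} [MeasurableSpace Ω] {μ : Measure Ω}
    {a b q : Ω → ℝ} (c : ℝ) (ha : Integrable a μ) (hbq : Integrable (fun ω => b ω / q ω) μ) :
    ∫ ω, (a ω / c + b ω / (q ω * c)) ∂μ = ((∫ ω, a ω ∂μ) + ∫ ω, b ω / q ω ∂μ) / c := by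
  have hsplit (ω : Ω) : a ω / c + b ω / (q ω * c) = (a ω + b ω / q ω) / c := by
    rw [add_div, div_div, mul_comm (q ω)]
  rw [integral_congr_ae (ae_of_all μ hsplit), integral_div, integral_add ha hbq]

theorem doubly_robust_representation_general
    {Ω 𝓧 : Type*} [MeasurableSpace Ω] [MeasurableSpace 𝓧]
    (μ : Measure Ω) [IsProbabilityMeasure μ]
    (D Y0 Y1 : Ω → ℝ) (X : Ω → 𝓧)
    (hDmeas : Measurable D) (hXmeas : Measurable X) (hY0meas : Measurable Y0)
    (hDbin : ∀ ω, D ω = 0 ∨ D ω = 1)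
    (hY0int : Integrable Y0 μ) (hY1int : Integrable Y1 μ)
    -- muYX is a version of E[Y₁ − Y₀ | Y₀, X, D=0]
    (muYX : ℝ × 𝓧 → ℝ) (hmuYXmeas : Measurable muYX)
    (hmuYX : (fun ω => muYX (Y0 ω, X ω)) =ᵐ[μ[|{ω | D ω = 0}]]
      MeasureTheory.condExp
        (MeasurableSpace.comap (fun ω => (Y0 ω, X ω)) inferInstance)
        (μ[|{ω | D ω = 0}]) (fun ω => Y1 ω - Y0 ω))
    -- muX is a version of E[Y₁ − Y₀ | X, D=0]
    (muX : 𝓧 → ℝ) (hmuXmeas : Measurable muX)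
    (hmuX : (fun ω => muX (X ω)) =ᵐ[μ[|{ω | D ω = 0}]]
      MeasureTheory.condExp (MeasurableSpace.comap X inferInstance)
        (μ[|{ω | D ω = 0}]) (fun ω => Y1 ω - Y0 ω))
    -- pYX is a version of the propensity score P(D=1 | Y₀, X)
    (pYX : ℝ × 𝓧 → ℝ) (hpYXmeas : Measurable pYX)
    -- pX is a version of the propensity score P(D=1 | X)
    (pX : 𝓧 → ℝ) (hpXmeas : Measurable pX)
    -- integrability of all displayed quantities
    (hint1 : Integrable (fun ω => muYX (Y0 ω, X ω) * D ω) μ)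
    (hint2 : Integrable (fun ω => muX (X ω) * D ω) μ)
    (hint5 : Integrable (fun ω => (Y1 ω - Y0 ω - muYX (Y0 ω, X ω)) * (1 - D ω) *
      pYX (Y0 ω, X ω) / (1 - pYX (Y0 ω, X ω))) μ)
    (hint6 : Integrable (fun ω => (Y1 ω - Y0 ω - muX (X ω)) * (1 - D ω) *
      pX (X ω) / (1 - pX (X ω))) μ) :
    -- (i) normalized treated moments equal conditional means given D=1
    ((∫ ω, muYX (Y0 ω, X ω) * D ω ∂μ) / (μ {ω | D ω = 1}).toReal =
      ∫ ω, muYX (Y0 ω, X ω) ∂(μ[|{ω | D ω = 1}]))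
    ∧ ((∫ ω, muX (X ω) * D ω ∂μ) / (μ {ω | D ω = 1}).toReal =
      ∫ ω, muX (X ω) ∂(μ[|{ω | D ω = 1}]))
    -- (ii) the augmentation terms have mean zero
    ∧ (∫ ω, (Y1 ω - Y0 ω - muYX (Y0 ω, X ω)) * (1 - D ω) *
        pYX (Y0 ω, X ω) / (1 - pYX (Y0 ω, X ω)) ∂μ = 0)
    ∧ (∫ ω, (Y1 ω - Y0 ω - muX (X ω)) * (1 - D ω) *
        pX (X ω) / (1 - pX (X ω)) ∂μ = 0)
    -- (iii) θ equals E[μ(Y₀,X) | D=1] − E[μ(X) | D=1]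
    ∧ ((∫ ω, (muYX (Y0 ω, X ω) * D ω / (μ {ω | D ω = 1}).toReal +
          (Y1 ω - Y0 ω - muYX (Y0 ω, X ω)) * (1 - D ω) * pYX (Y0 ω, X ω) /
            ((1 - pYX (Y0 ω, X ω)) * (μ {ω | D ω = 1}).toReal)) ∂μ) -
        (∫ ω, (muX (X ω) * D ω / (μ {ω | D ω = 1}).toReal +
          (Y1 ω - Y0 ω - muX (X ω)) * (1 - D ω) * pX (X ω) /
            ((1 - pX (X ω)) * (μ {ω | D ω = 1}).toReal)) ∂μ) =
        ∫ ω, muYX (Y0 ω, X ω) ∂(μ[|{ω | D ω = 1}]) -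
        ∫ ω, muX (X ω) ∂(μ[|{ω | D ω = 1}])) := by
  have hleYX := (hY0meas.prodMk hXmeas).comap_le
  have hleX := hXmeas.comap_le
  have i1 := integral_mul_div_eq_integral_cond_of_zero_or_one (μ := μ) hDmeas hDbin
    fun ω => muYX (Y0 ω, X ω)
  have i2 := integral_mul_div_eq_integral_cond_of_zero_or_one (μ := μ) hDmeas hDbin
    fun ω => muX (X ω)
  have z1 := integral_residual_mul_odds_eq_zero (h := fun ω => Y1 ω - Y0 ω)
    (g := fun ω => muYX (Y0 ω, X ω)) (p := fun ω => pYX (Y0 ω, X ω)) hleYX hDmeas hDbin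
    (hY1int.sub hY0int) (hmuYXmeas.comp (comap_measurable _)) hmuYX
    (hpYXmeas.comp (comap_measurable _)) hint5
  have z2 := integral_residual_mul_odds_eq_zero (h := fun ω => Y1 ω - Y0 ω)
    (g := fun ω => muX (X ω)) (p := fun ω => pX (X ω)) hleX hDmeas hDbin
    (hY1int.sub hY0int) (hmuXmeas.comp (comap_measurable X)) hmuX
    (hpXmeas.comp (comap_measurable X)) hint6
  refine ⟨i1, i2, z1, z2, ?_⟩
  rw [integral_div_add_div_mul (μ := μ) (q := fun ω => 1 - pYX (Y0 ω, X ω)) _ hint1 hint5,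
    integral_div_add_div_mul (μ := μ) (q := fun ω => 1 - pX (X ω)) _ hint2 hint6,
    z1, z2, add_zero, add_zero, i1, i2]

/-- Doubly robust representation of the test statistic: the DR moment `θ` equals
`E[μ(Y₀,X) | D=1] − E[μ(X) | D=1]`. -/
theorem doubly_robust_representation
    {Ω 𝓧 : Type*} [MeasurableSpace Ω] [MeasurableSpace 𝓧]
    (μ : Measure Ω) [IsProbabilityMeasure μ]
    (D Y0 Y1 : Ω → ℝ) (X : Ω → 𝓧)
    (hDmeas : Measurable D) (hXmeas : Measurable X) (hY0meas : Measurable Y0)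
    (hDbin : ∀ ω, D ω = 0 ∨ D ω = 1)
    (hD1pos : 0 < μ {ω | D ω = 1})
    (hD1lt : μ {ω | D ω = 1} < 1)
    (hY0int : Integrable Y0 μ) (hY1int : Integrable Y1 μ)
    -- muYX is a version of E[Y₁ − Y₀ | Y₀, X, D=0]
    (muYX : ℝ × 𝓧 → ℝ) (hmuYXmeas : Measurable muYX)
    (hmuYX : (fun ω => muYX (Y0 ω, X ω)) =ᵐ[μ[|{ω | D ω = 0}]]
      MeasureTheory.condExp
        (MeasurableSpace.comap (fun ω => (Y0 ω, X ω)) inferInstance)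
        (μ[|{ω | D ω = 0}]) (fun ω => Y1 ω - Y0 ω))
    -- muX is a version of E[Y₁ − Y₀ | X, D=0]
    (muX : 𝓧 → ℝ) (hmuXmeas : Measurable muX)
    (hmuX : (fun ω => muX (X ω)) =ᵐ[μ[|{ω | D ω = 0}]]
      MeasureTheory.condExp (MeasurableSpace.comap X inferInstance)
        (μ[|{ω | D ω = 0}]) (fun ω => Y1 ω - Y0 ω))
    -- pYX is a version of the propensity score P(D=1 | Y₀, X)
    (pYX : ℝ × 𝓧 → ℝ) (hpYXmeas : Measurable pYX)
    (hpYX : (fun ω => pYX (Y0 ω, X ω)) =ᵐ[μ]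
      MeasureTheory.condExp
        (MeasurableSpace.comap (fun ω => (Y0 ω, X ω)) inferInstance) μ D)
    -- pX is a version of the propensity score P(D=1 | X)
    (pX : 𝓧 → ℝ) (hpXmeas : Measurable pX)
    (hpX : (fun ω => pX (X ω)) =ᵐ[μ]
      MeasureTheory.condExp (MeasurableSpace.comap X inferInstance) μ D)
    -- common support: p(Y₀, X) < 1 almost surely
    (hCS : ∀ᵐ ω ∂μ, pYX (Y0 ω, X ω) < 1)
    -- integrability of all displayed quantities
    (hint1 : Integrable (fun ω => muYX (Y0 ω, X ω) * D ω) μ)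
    (hint2 : Integrable (fun ω => muX (X ω) * D ω) μ)
    (hint3 : Integrable (fun ω => muYX (Y0 ω, X ω)) (μ[|{ω | D ω = 1}]))
    (hint4 : Integrable (fun ω => muX (X ω)) (μ[|{ω | D ω = 1}]))
    (hint5 : Integrable (fun ω => (Y1 ω - Y0 ω - muYX (Y0 ω, X ω)) * (1 - D ω) *
      pYX (Y0 ω, X ω) / (1 - pYX (Y0 ω, X ω))) μ)
    (hint6 : Integrable (fun ω => (Y1 ω - Y0 ω - muX (X ω)) * (1 - D ω) *
      pX (X ω) / (1 - pX (X ω))) μ) :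
    -- (i) normalized treated moments equal conditional means given D=1
    ((∫ ω, muYX (Y0 ω, X ω) * D ω ∂μ) / (μ {ω | D ω = 1}).toReal =
      ∫ ω, muYX (Y0 ω, X ω) ∂(μ[|{ω | D ω = 1}]))
    ∧ ((∫ ω, muX (X ω) * D ω ∂μ) / (μ {ω | D ω = 1}).toReal =
      ∫ ω, muX (X ω) ∂(μ[|{ω | D ω = 1}]))
    -- (ii) the augmentation terms have mean zero
    ∧ (∫ ω, (Y1 ω - Y0 ω - muYX (Y0 ω, X ω)) * (1 - D ω) *
        pYX (Y0 ω, X ω) / (1 - pYX (Y0 ω, X ω)) ∂μ = 0)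
    ∧ (∫ ω, (Y1 ω - Y0 ω - muX (X ω)) * (1 - D ω) *
        pX (X ω) / (1 - pX (X ω)) ∂μ = 0)
    -- (iii) θ equals E[μ(Y₀,X) | D=1] − E[μ(X) | D=1]
    ∧ ((∫ ω, (muYX (Y0 ω, X ω) * D ω / (μ {ω | D ω = 1}).toReal +
          (Y1 ω - Y0 ω - muYX (Y0 ω, X ω)) * (1 - D ω) * pYX (Y0 ω, X ω) /
            ((1 - pYX (Y0 ω, X ω)) * (μ {ω | D ω = 1}).toReal)) ∂μ) -
        (∫ ω, (muX (X ω) * D ω / (μ {ω | D ω = 1}).toReal +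
          (Y1 ω - Y0 ω - muX (X ω)) * (1 - D ω) * pX (X ω) /
            ((1 - pX (X ω)) * (μ {ω | D ω = 1}).toReal)) ∂μ) =
        ∫ ω, muYX (Y0 ω, X ω) ∂(μ[|{ω | D ω = 1}]) -
        ∫ ω, muX (X ω) ∂(μ[|{ω | D ω = 1}])) :=
  doubly_robust_representation_general μ D Y0 Y1 X hDmeas hXmeas hY0meas hDbin hY0int hY1int muYX
    hmuYXmeas hmuYX muX hmuXmeas hmuX pYX hpYXmeas pX hpXmeas hint1 hint2 hint5 hint6
end
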